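/- For any translation σ ≠ id of an affine plane, the set of all traces of points under σ forms a single parallel class: for all points P, Q, the line through P and σ(P) is parallel to the line through Q and σ(Q). -/
import Mathlib


/-- An affine plane: an incidence structure `(P, L, mem)` with a line through any two
distinct points (unique), the parallel postulate, and three non-collinear points. -/
structure AffinePlane (P L : Type*) where
  mem : P → L → Prop
  line : P → P → L
  mem_line_left : ∀ ⦃A B : P⦄, A ≠ B → mem A (line A B)
  mem_line_right : ∀ ⦃A B : P⦄, A ≠ B → mem B (line A B)
  line_unique : ∀ ⦃A B : P⦄ ⦃l : L⦄, A ≠ B → mem A l → mem B l → l = line A B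
  parallel_postulate : ∀ (Q : P) (l : L),
    ∃! m : L, mem Q m ∧ (m = l ∨ ∀ X : P, ¬(mem X m ∧ mem X l))
  nondegenerate : ∃ A B C : P, A ≠ B ∧ ¬ mem C (line A B)

namespace AffinePlane

variable {P L : Type*}

/-- Two lines are parallel iff they coincide or have no common point. -/
def parallel (A : AffinePlane P L) (l m : L) : Prop :=
  l = m ∨ ∀ X : P, ¬(A.mem X l ∧ A.mem X m)

/-- A collineation: a bijection of points mapping lines onto lines. -/
def IsCollineation (A : AffinePlane P L) (φ : Equiv.Perm P) : Prop :=
  ∀ l : L, ∃ m : L, ∀ X : P, A.mem X m ↔ A.mem (φ.symm X) l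

/-- A dilation: a collineation with `φ(Q)φ(R) ∥ QR` for all distinct `Q, R`. -/
def IsDilation (A : AffinePlane P L) (φ : Equiv.Perm P) : Prop :=
  A.IsCollineation φ ∧ ∀ ⦃Q R : P⦄, Q ≠ R → A.parallel (A.line (φ Q) (φ R)) (A.line Q R)

/-- A translation: the identity or a fixed-point-free dilation. -/
def IsTranslation (A : AffinePlane P L) (φ : Equiv.Perm P) : Prop :=
  φ = 1 ∨ (A.IsDilation φ ∧ ∀ X : P, φ X ≠ X)

/-- `σ` and `τ` have the same direction: every trace of `σ` is parallel to every trace of `τ`. -/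
def SameDirection (A : AffinePlane P L) (σ τ : Equiv.Perm P) : Prop :=
  ∀ Q R : P, A.parallel (A.line Q (σ Q)) (A.line R (τ R))

end AffinePlane

/-- All traces of a translation `σ ≠ id` form a single parallel class. -/
theorem traces_parallel {P L : Type*} (A : AffinePlane P L)
    {σ : Equiv.Perm P} (hσ : A.IsTranslation σ) (hne : σ ≠ 1) :
    ∀ Q R : P, A.parallel (A.line Q (σ Q)) (A.line R (σ R)) := by
  rcases hσ with h1 | ⟨⟨hcol, hdil⟩, hfp⟩
  · exact absurd h1 hne
  -- Each trace line is invariant under σ.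
  have inv : ∀ Q X : P,
      A.mem X (A.line Q (σ Q)) ↔ A.mem (σ.symm X) (A.line Q (σ Q)) := by
    intro Q
    have hQ : Q ≠ σ Q := fun h => hfp Q h.symm
    obtain ⟨m, hm⟩ := hcol (A.line Q (σ Q))
    have hσQ : A.mem (σ Q) m := by
      rw [hm]; simpa using A.mem_line_left hQ
    have hσσQ : A.mem (σ (σ Q)) m := by
      rw [hm]; simpa using A.mem_line_right hQ
    have hQ2 : σ Q ≠ σ (σ Q) := fun h => hQ (σ.injective h)
    have hmeq : m = A.line (σ Q) (σ (σ Q)) := A.line_unique hQ2 hσQ hσσQ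
    have hmain : m = A.line Q (σ Q) := by
      rcases hdil hQ with h | h
      · rw [hmeq, h]
      · exact absurd ⟨hmeq ▸ hσQ, A.mem_line_right hQ⟩ (h (σ Q))
    intro X
    rw [← hmain, hm, hmain]
  intro Q R
  by_cases heq : A.line Q (σ Q) = A.line R (σ R)
  · exact Or.inl heq
  · refine Or.inr fun X ⟨hX1, hX2⟩ => ?_
    have hσX1 : A.mem (σ X) (A.line Q (σ Q)) := by
      have := (inv Q (σ X)).symm
      rw [Equiv.symm_apply_apply] at this
      exact this.mp hX1
    have hσX2 : A.mem (σ X) (A.line R (σ R)) := by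
      have := (inv R (σ X)).symm
      rw [Equiv.symm_apply_apply] at this
      exact this.mp hX2
    have hXne : X ≠ σ X := fun h => hfp X h.symm
    exact heq ((A.line_unique hXne hX1 hσX1).trans
      (A.line_unique hXne hX2 hσX2).symm)
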